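/- There exists a unique real number alpha in the open interval (1, 2) such that -2*alpha + 3 + (alpha - 1) * log(2*(alpha - 1)/alpha) = 0; moreover this alpha satisfies 11/8 < alpha < 8/5. -/
import Mathlib

open Real Set

noncomputable def fAlpha (x : ℝ) : ℝ := -2*x + 3 + (x-1) * Real.log (2*(x-1)/x)

lemma fAlpha_hasDerivAt {x : ℝ} (hx1 : 1 < x) (hx2 : x < 2) :
    HasDerivAt fAlpha (-2 + Real.log (2*(x-1)/x) + 1/x) x := by
  have hx0 : x ≠ 0 := by linarith
  have hg : 0 < 2*(x-1)/x := div_pos (by linarith) (by linarith)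
  have h1 : HasDerivAt (fun x : ℝ => 2*(x-1)) 2 x := by
    simpa using ((hasDerivAt_id x).sub_const 1).const_mul 2
  have h2 : HasDerivAt (fun x : ℝ => 2*(x-1)/x) ((2*x - 2*(x-1)*1)/x^2) x :=
    h1.div (hasDerivAt_id x) hx0
  have h3 := h2.log (ne_of_gt hg)
  have h4 : HasDerivAt (fun x : ℝ => (x-1) * Real.log (2*(x-1)/x))
      (1 * Real.log (2*(x-1)/x) + (x-1) * (((2*x - 2*(x-1)*1)/x^2) / (2*(x-1)/x))) x :=
    ((hasDerivAt_id x).sub_const 1).mul h3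
  have h5 : HasDerivAt fAlpha
      (-2 + (1 * Real.log (2*(x-1)/x) +
        (x-1) * (((2*x - 2*(x-1)*1)/x^2) / (2*(x-1)/x)))) x := by
    have h6 : HasDerivAt (fun x : ℝ => -2*x + 3) (-2) x := by
      simpa using ((hasDerivAt_id x).const_mul (-2)).add_const 3
    exact h6.add h4
  convert h5 using 1
  have hx1' : x - 1 ≠ 0 := by linarith
  field_simp
  ring

lemma fAlpha_anti : StrictAntiOn fAlpha (Ioo (1:ℝ) 2) := by
  apply strictAntiOn_of_deriv_neg (convex_Ioo 1 2)
  · intro x hx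
    exact (fAlpha_hasDerivAt hx.1 hx.2).continuousAt.continuousWithinAt
  · intro x hx
    rw [interior_Ioo] at hx
    rw [(fAlpha_hasDerivAt hx.1 hx.2).deriv]
    have hg : 0 < 2*(x-1)/x := div_pos (by linarith [hx.1]) (by linarith [hx.1])
    have hg1 : 2*(x-1)/x < 1 := (div_lt_one (by linarith [hx.1])).2 (by linarith [hx.2])
    have hlog : Real.log (2*(x-1)/x) < 0 := Real.log_neg hg hg1
    have hxinv : 1/x < 1 := by
      rw [div_lt_one (by linarith [hx.1])]; exact hx.1
    linarith

lemma fAlpha_pos : 0 < fAlpha (11/8) := by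
  have e16 : (7/6:ℝ) ≤ Real.exp (1/6) := by
    have := Real.add_one_le_exp (1/6:ℝ); linarith
  have epow : ((7:ℝ)/6)^4 ≤ Real.exp (1/6) ^ 4 :=
    pow_le_pow_left₀ (by norm_num) e16 4
  have hexp : Real.exp (1/6) ^ 4 = Real.exp (2/3) := by
    rw [← Real.exp_nat_mul]; norm_num
  have e23 : (11/6:ℝ) < Real.exp (2/3) := by
    rw [← hexp]; nlinarith [epow]
  have hlog : Real.log (11/6) < 2/3 := (Real.log_lt_iff_lt_exp (by norm_num)).2 e23
  have hlog' : Real.log (6/11 : ℝ) = - Real.log (11/6) := by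
    rw [← Real.log_inv]; norm_num
  have harg : (2*((11:ℝ)/8-1)/(11/8)) = 6/11 := by norm_num
  unfold fAlpha
  rw [harg, hlog']
  nlinarith

lemma fAlpha_neg : fAlpha (8/5) < 0 := by
  have harg : (2*((8:ℝ)/5-1)/(8/5)) = 3/4 := by norm_num
  have hlog : Real.log (3/4 : ℝ) < 0 := Real.log_neg (by norm_num) (by norm_num)
  unfold fAlpha
  rw [harg]
  nlinarith

theorem alpha_exists_unique :
    (∃! alpha : ℝ, (1 < alpha ∧ alpha < 2) ∧
        -2 * alpha + 3 + (alpha - 1) * Real.log (2 * (alpha - 1) / alpha) = 0) ∧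
    (∀ alpha : ℝ, 1 < alpha → alpha < 2 →
        -2 * alpha + 3 + (alpha - 1) * Real.log (2 * (alpha - 1) / alpha) = 0 →
        11 / 8 < alpha ∧ alpha < 8 / 5) := by
  have ha : (11/8:ℝ) ∈ Ioo (1:ℝ) 2 := by constructor <;> norm_num
  have hb : (8/5:ℝ) ∈ Ioo (1:ℝ) 2 := by constructor <;> norm_num
  have hsub : Icc (11/8:ℝ) (8/5) ⊆ Ioo (1:ℝ) 2 := by
    intro x hx
    exact ⟨by linarith [hx.1], by linarith [hx.2]⟩
  have hcont : ContinuousOn fAlpha (Icc (11/8:ℝ) (8/5)) := fun x hx =>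
    ((fAlpha_hasDerivAt (hsub hx).1 (hsub hx).2).continuousAt).continuousWithinAt
  have hivt := intermediate_value_Icc' (by norm_num : (11/8:ℝ) ≤ 8/5) hcont
  obtain ⟨c, hc, hfc⟩ := hivt ⟨le_of_lt fAlpha_neg, le_of_lt fAlpha_pos⟩
  have hcIoo : c ∈ Ioo (1:ℝ) 2 := hsub hc
  -- bounds for any root
  have bounds : ∀ alpha : ℝ, 1 < alpha → alpha < 2 →
      -2 * alpha + 3 + (alpha - 1) * Real.log (2 * (alpha - 1) / alpha) = 0 →
      11 / 8 < alpha ∧ alpha < 8 / 5 := by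
    intro a h1 h2 h0
    have hf0 : fAlpha a = 0 := by unfold fAlpha; linarith [h0]
    have haIoo : a ∈ Ioo (1:ℝ) 2 := ⟨h1, h2⟩
    constructor
    · by_contra h
      push_neg at h
      rcases lt_or_eq_of_le h with h' | h'
      · have := fAlpha_anti haIoo ha h'
        linarith [fAlpha_pos]
      · rw [h'] at hf0
        linarith [fAlpha_pos]
    · by_contra h
      push_neg at h
      rcases lt_or_eq_of_le h with h' | h'
      · have := fAlpha_anti hb haIoo h'
        linarith [fAlpha_neg]
      · rw [← h'] at hf0
        linarith [fAlpha_neg]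
  refine ⟨⟨c, ⟨⟨hcIoo.1, hcIoo.2⟩, ?_⟩, ?_⟩, bounds⟩
  · show -2 * c + 3 + (c - 1) * Real.log (2 * (c - 1) / c) = 0
    have : fAlpha c = 0 := hfc
    unfold fAlpha at this; linarith
  · rintro y ⟨⟨hy1, hy2⟩, hy0⟩
    have hfy : fAlpha y = 0 := by unfold fAlpha; linarith
    exact fAlpha_anti.injOn ⟨hy1, hy2⟩ hcIoo (by rw [hfy, hfc])
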